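/- arXiv:1312.3098 — 6 statements merged into one kernel-verified Lean document; each statement's English description precedes it below -/
import Mathlib

section
/- Let Γ be a countably infinite discrete amenable group and f ∈ ℤΓ. Then f is a right zero-divisor in ℤΓ if and only if f is a left zero-divisor in ℤΓ. -/
/-!
Conjugating by the anti-automorphism `x ↦ x⁻¹` of `R[Γ]` exchanges left and right zero-divisors,
and clearing denominators passes between `ℤ[Γ]` and `ℚ[Γ]`, so it suffices to show that over a
field `K` a right regular `f` is left regular. Suppose `f * g = 0` with `g ≠ 0`, normalised to
`g 1 ≠ 0`, and let `E` be a Følner set. The translates `g * s`, for `s` running over a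
`supp g`-separated subset of the points of `E` whose `supp g`-translates stay in `E`, are about
`|E| / (2 |supp g|)` linearly independent solutions of `f * v = 0` supported in `E`. But the
solutions supported in `T = E ∪ (supp f)⁻¹ E` form the kernel of the `E × T` matrix of
`v ↦ (f * v)|_E`, whose rows are independent because `f` is right regular; so there are at most
`|T| - |E| = o(|E|)` of them.
-/

open Filter
open scoped Classical

/-- A Følner sequence for a countable discrete group: a sequence of nonempty finite subsets
that is asymptotically invariant under left translation. Its existence characterizes
amenability for countable discrete groups. -/

def IsFolnerSeq {Γ : Type*} [Group Γ] (F : ℕ → Finset Γ) : Prop :=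
  (∀ n, (F n).Nonempty) ∧
    ∀ γ : Γ, Tendsto
      (fun n => (((F n).image (fun δ => γ * δ) \ F n).card : ℝ) / (F n).card)
      atTop (nhds 0)

open MulOpposite Function

section Regular

variable {M N : Type*} [Mul M] [Mul N]

theorem MulEquiv.isLeftRegular_apply_iff (e : M ≃* N) {a : M} :
    IsLeftRegular (e a) ↔ IsLeftRegular a where
  mp h x y hxy := e.injective <| h <| by simp only [← map_mul, hxy]
  mpr h x y hxy := e.symm.injective <| h <| by simpa using congrArg e.symm hxy

theorem MulEquiv.isRightRegular_apply_iff (e : M ≃* N) {a : M} :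
    IsRightRegular (e a) ↔ IsRightRegular a where
  mp h x y hxy := e.injective <| h <| by simp only [← map_mul, hxy]
  mpr h x y hxy := e.symm.injective <| h <| by simpa using congrArg e.symm hxy

theorem IsLeftRegular.of_map {F : Type*} [FunLike F M N] [MulHomClass F M N] {φ : F}
    (hφ : Injective φ) {a : M} (h : IsLeftRegular (φ a)) : IsLeftRegular a :=
  fun x y hxy => hφ <| h <| by simp only [← map_mul, hxy]

theorem isRightRegular_of_isLeftRegular_of_mulEquiv_op (e : M ≃* Mᵐᵒᵖ)
    (h : ∀ a : M, IsRightRegular a → IsLeftRegular a) {a : M} (ha : IsLeftRegular a) :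
    IsRightRegular a := by
  have := h (e.symm (op a)) (e.symm.isRightRegular_apply_iff.2 (isRightRegular_op.2 ha))
  exact isLeftRegular_op.1 (e.symm.isLeftRegular_apply_iff.1 this)

end Regular

namespace MonoidAlgebra

section invOp

variable {R Γ : Type*} [CommSemiring R] [Group Γ]

noncomputable def invOp : R[Γ] ≃+* R[Γ]ᵐᵒᵖ :=
  ((mapDomainRingEquiv R (MulEquiv.inv' Γ)).trans
    (mapRingEquiv Γᵐᵒᵖ (RingEquiv.toOpposite R))).trans MonoidAlgebra.opRingEquiv.symm

@[simp]
theorem coeff_unop_invOp (f : R[Γ]) (x : Γ) : (unop (invOp f)).coeff x = f.coeff x⁻¹ := by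
  simp [invOp]

theorem isLeftRegular_unop_invOp_iff {f : R[Γ]} :
    IsLeftRegular (unop (invOp f)) ↔ IsRightRegular f := by
  rw [← isRightRegular_op, op_unop]
  exact invOp.toMulEquiv.isRightRegular_apply_iff

end invOp

section FractionRing

variable {R K M : Type*} [CommRing R] [Field K] [Algebra R K] [IsFractionRing R K]
  [Monoid M]

theorem exists_mapRingHom_eq_smul [IsDomain R] (W : K[M]) :
    ∃ r : R, r ≠ 0 ∧ ∃ V : R[M], mapRingHom M (algebraMap R K) V = algebraMap R K r • W := by
  induction W using MonoidAlgebra.induction_linear with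
  | zero => exact ⟨1, one_ne_zero, 0, by simp⟩
  | add W₁ W₂ h₁ h₂ =>
    obtain ⟨r₁, hr₁, V₁, hV₁⟩ := h₁
    obtain ⟨r₂, hr₂, V₂, hV₂⟩ := h₂
    refine ⟨r₁ * r₂, mul_ne_zero hr₁ hr₂, r₂ • V₁ + r₁ • V₂, ?_⟩
    ext x
    have h₁ := congrArg (coeff · x) hV₁
    have h₂ := congrArg (coeff · x) hV₂
    simp only [coeff_mapRingHom, coeff_smul, Finsupp.smul_apply, smul_eq_mul] at h₁ h₂
    simp only [coeff_mapRingHom, coeff_add, coeff_smul, Finsupp.add_apply, Finsupp.smul_apply,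
      smul_eq_mul, map_add, map_mul, h₁, h₂]
    ring
  | single x k =>
    obtain ⟨n, d, hd, rfl⟩ := IsFractionRing.div_surjective (A := R) k
    have hd₀ : algebraMap R K d ≠ 0 := IsFractionRing.to_map_ne_zero_of_mem_nonZeroDivisors hd
    refine ⟨d, nonZeroDivisors.ne_zero hd, single x n, ?_⟩
    rw [mapRingHom_single, smul_single, smul_eq_mul, mul_div_cancel₀ _ hd₀]

theorem isRightRegular_mapRingHom [IsDomain R] {f : R[M]} (hf : IsRightRegular f) :
    IsRightRegular (mapRingHom M (algebraMap R K) f) := by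
  rw [isRightRegular_iff_left_eq_zero_of_mul] at hf ⊢
  intro W hW
  obtain ⟨r, hr, V, hV⟩ := exists_mapRingHom_eq_smul (R := R) W
  have hV₀ : V = 0 := hf V <| (injective_iff_map_eq_zero (mapRingHom M (algebraMap R K))).1
    (map_injective _ (IsFractionRing.injective R K)) _ <| by
      rw [map_mul, hV, smul_mul_assoc, hW, smul_zero]
  simpa [hV₀, hr] using hV.symm

theorem isLeftRegular_of_isLeftRegular_mapRingHom {f : R[M]}
    (hf : IsLeftRegular (mapRingHom M (algebraMap R K) f)) : IsLeftRegular f :=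
  hf.of_map (map_injective _ (IsFractionRing.injective R K))

end FractionRing

end MonoidAlgebra

open scoped Pointwise

namespace Finset

variable {Γ : Type*} [Group Γ]

theorem exists_subset_separated (A D : Finset Γ) (hA : (1 : Γ) ∈ A) :
    ∃ S ⊆ D, (∀ s ∈ S, ∀ t ∈ S, s * t⁻¹ ∈ A → s = t) ∧ D.card ≤ 2 * A.card * S.card := by
  obtain ⟨S, hS, hmax⟩ := (D.powerset.filter fun S => ∀ s ∈ S, ∀ t ∈ S, s * t⁻¹ ∈ A → s = t)
    |>.exists_max_image card ⟨∅, by simp⟩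
  obtain ⟨hSD, hSsep⟩ := mem_filter.1 hS
  refine ⟨S, mem_powerset.1 hSD, hSsep, ?_⟩
  -- a maximal separated subset is a net: every point of `D` is within `A ∪ A⁻¹` of it
  have hcover : D ⊆ (A ∪ A⁻¹) * S := by
    intro d hd
    by_contra hdS
    have hdS' : d ∉ S := fun h => hdS (mem_mul.2 ⟨1, mem_union_left _ hA, d, h, one_mul d⟩)
    have hsep : ∀ s ∈ insert d S, ∀ t ∈ insert d S, s * t⁻¹ ∈ A → s = t := by
      intro s hs t ht hst
      rcases mem_insert.1 hs with rfl | hsS <;> rcases mem_insert.1 ht with rfl | htS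
      · rfl
      · exact (hdS <| mem_mul.2
          ⟨s * t⁻¹, mem_union_left _ hst, t, htS, inv_mul_cancel_right s t⟩).elim
      · refine (hdS <| mem_mul.2
          ⟨t * s⁻¹, mem_union_right _ ?_, s, hsS, inv_mul_cancel_right t s⟩).elim
        rwa [mem_inv', mul_inv_rev, inv_inv]
      · exact hSsep s hsS t htS hst
    have := hmax (insert d S)
      (mem_filter.2 ⟨mem_powerset.2 (insert_subset hd (mem_powerset.1 hSD)), hsep⟩)
    rw [card_insert_of_notMem hdS'] at this
    omega
  calc D.card ≤ ((A ∪ A⁻¹) * S).card := card_le_card hcover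
    _ ≤ (A ∪ A⁻¹).card * S.card := card_mul_le
    _ ≤ 2 * A.card * S.card := by
      gcongr
      exact card_union_le _ _ |>.trans (by rw [card_inv]; omega)

theorem card_le_card_filter_add_sum_card_image_sdiff (A E : Finset Γ) :
    E.card ≤ (E.filter fun e => ∀ a ∈ A, a * e ∈ E).card +
      ∑ a ∈ A, (E.image (a * ·) \ E).card := by
  calc E.card = (E.filter fun e => ∀ a ∈ A, a * e ∈ E).card +
        (E.filter fun e => ¬ ∀ a ∈ A, a * e ∈ E).card :=
        (card_filter_add_card_filter_not _).symm
    _ ≤ _ + (A.biUnion fun a => (E.image (a * ·) \ E).image (a⁻¹ * ·)).card := by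
        gcongr
        intro e he
        obtain ⟨heE, a, ha, hae⟩ : e ∈ E ∧ ∃ a ∈ A, a * e ∉ E := by simpa using he
        exact mem_biUnion.2 ⟨a, ha, mem_image.2 ⟨a * e, by simp [heE, hae], by group⟩⟩
    _ ≤ _ := by
        gcongr
        exact card_biUnion_le.trans (sum_le_sum fun a _ => card_image_le)

theorem card_union_biUnion_image_sdiff_le (B E : Finset Γ) :
    (E ∪ B.biUnion fun b => E.image (b * ·) \ E).card ≤
      E.card + ∑ b ∈ B, (E.image (b * ·) \ E).card :=
  (card_union_le _ _).trans (by gcongr; exact card_biUnion_le)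

theorem mul_sum_card_image_sdiff_le {A E : Finset Γ} {N : ℕ}
    (hE : ∀ a ∈ A, N * (E.image (a * ·) \ E).card ≤ E.card) :
    N * ∑ a ∈ A, (E.image (a * ·) \ E).card ≤ A.card * E.card := by
  rw [mul_sum]
  simpa using sum_le_card_nsmul A _ _ hE

end Finset

theorem IsFolnerSeq.exists_mul_card_image_sdiff_le {Γ : Type*} [Group Γ] {F : ℕ → Finset Γ}
    (hF : IsFolnerSeq F) (G : Finset Γ) (N : ℕ) :
    ∃ E : Finset Γ, E.Nonempty ∧ ∀ γ ∈ G, N * (E.image (γ * ·) \ E).card ≤ E.card := by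
  have h : ∀ᶠ n in atTop, ∀ γ ∈ G, N * ((F n).image (γ * ·) \ F n).card ≤ (F n).card := by
    refine (eventually_all_finset G).2 fun γ _ => ?_
    filter_upwards [(hF.2 γ).eventually (gt_mem_nhds (by positivity : (0 : ℝ) < 1 / (N + 1)))]
      with n hn
    have hpos : (0 : ℝ) < (F n).card := by exact_mod_cast (hF.1 n).card_pos
    rw [div_lt_div_iff₀ hpos (by positivity)] at hn
    exact_mod_cast (by nlinarith : (N : ℝ) * ((F n).image (γ * ·) \ F n).card ≤ (F n).card)
  obtain ⟨n, hn⟩ := h.exists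
  exact ⟨F n, hF.1 n, hn⟩

namespace MonoidAlgebra

open Finset

section Semiring

variable {R Γ : Type*} [Semiring R] [Group Γ]

theorem coeff_mul_eq_sum_of_support_subset (a v : R[Γ]) {T : Finset Γ}
    (hv : v.coeff.support ⊆ T) (y : Γ) :
    (a * v).coeff y = ∑ x ∈ T, a.coeff (y * x⁻¹) * v.coeff x := by
  rw [coeff_mul_apply_right, Finsupp.sum_of_support_subset _ hv]
  simp

theorem exists_mul_eq_zero_coeff_one_ne_zero {f g : R[Γ]} (hfg : f * g = 0) (hg : g ≠ 0) :
    ∃ g' : R[Γ], g'.coeff 1 ≠ 0 ∧ f * g' = 0 := by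
  obtain ⟨s, hs⟩ : ∃ s, g.coeff s ≠ 0 := by
    by_contra! h
    exact hg (MonoidAlgebra.ext (Finsupp.ext h))
  exact ⟨g * single s⁻¹ 1, by simpa using hs, by rw [← mul_assoc, hfg, zero_mul]⟩

/-- Matrix of `v ↦ (f * v)|_E` on the elements `v` supported in `T`. -/
def mulMatrix (f : R[Γ]) (E T : Finset Γ) : Matrix E T R :=
  Matrix.of fun y x => f.coeff ((y : Γ) * (x : Γ)⁻¹)

end Semiring

theorem linearIndependent_mul_single {R Γ : Type*} [Ring R] [NoZeroDivisors R] [Group Γ]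
    {g : R[Γ]} (hg : g.coeff 1 ≠ 0) {S : Finset Γ}
    (hS : ∀ s ∈ S, ∀ t ∈ S, s * t⁻¹ ∈ g.coeff.support → s = t) :
    LinearIndependent R fun s : S => g * single (s : Γ) (1 : R) := by
  rw [Fintype.linearIndependent_iff]
  intro c hc s
  have h := congrArg (coeff · (s : Γ)) hc
  simp only [coeff_sum, Finsupp.finsetSum_apply, coeff_smul, Finsupp.smul_apply, smul_eq_mul,
    coeff_mul_single_apply, mul_one, coeff_zero, Finsupp.coe_zero, Pi.zero_apply] at h
  rw [sum_eq_single s (fun t _ hts => ?_) (by simp), mul_inv_cancel] at h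
  · exact (mul_eq_zero.1 h).resolve_right hg
  · have : (s : Γ) * (t : Γ)⁻¹ ∉ g.coeff.support := fun hmem =>
      hts (Subtype.ext (hS s s.2 t t.2 hmem).symm)
    rw [Finsupp.notMem_support_iff.1 this, mul_zero]

section Field

variable {K Γ : Type*} [Field K] [Group Γ]

theorem rank_mulMatrix {f : K[Γ]} (hf : IsRightRegular f) {E T : Finset Γ}
    (hET : ∀ b ∈ (unop (invOp f)).coeff.support, ∀ e ∈ E, b * e ∈ T) :
    (mulMatrix f E T).rank = E.card := by
  suffices LinearIndependent K (mulMatrix f E T).row by rw [this.rank_matrix, Fintype.card_coe]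
  rw [Fintype.linearIndependent_iff]
  intro w hw
  set W : K[Γ] := ofCoeff (Finsupp.equivFunOnFinite.symm w).extendDomain
  have hWsupp : W.coeff.support ⊆ E := fun y hy => by
    by_contra h
    simp [W, h] at hy
  -- the rows of `mulMatrix f E T` are the coefficients of `unop (invOp f) * single y 1`
  have hW : unop (invOp f) * W = 0 := by
    ext x
    rw [coeff_mul_eq_sum_of_support_subset _ _ hWsupp]
    by_cases hx : x ∈ T
    · have := congrFun hw ⟨x, hx⟩
      simp only [Finset.sum_apply, Pi.smul_apply, Matrix.row, mulMatrix, Matrix.of_apply,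
        smul_eq_mul, Pi.zero_apply] at this
      rw [← sum_coe_sort E]
      simpa [W, mul_comm] using this
    · refine sum_eq_zero fun y hy => ?_
      have : x * y⁻¹ ∉ (unop (invOp f)).coeff.support := fun h =>
        hx (by simpa using hET _ h y hy)
      rw [Finsupp.notMem_support_iff.1 this, zero_mul]
  have hW0 : W = 0 := (isLeftRegular_iff_right_eq_zero_of_mul.1
    (isLeftRegular_unop_invOp_iff.2 hf)) W hW
  intro y
  simpa [W] using congrArg (fun u : K[Γ] => u.coeff y) hW0

theorem card_add_card_le_card {f : K[Γ]} (hf : IsRightRegular f) {E T : Finset Γ}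
    (hET : ∀ b ∈ (unop (invOp f)).coeff.support, ∀ e ∈ E, b * e ∈ T)
    {S : Type*} [Fintype S] {v : S → K[Γ]} (hv : LinearIndependent K v)
    (hvT : ∀ i, (v i).coeff.support ⊆ T) (hfv : ∀ i, f * v i = 0) :
    E.card + Fintype.card S ≤ T.card := by
  let V : Matrix T S K := Matrix.of fun x i => (v i).coeff x
  have hV : V.rank = Fintype.card S := by
    suffices LinearIndependent K V.transpose.row by rw [← Matrix.rank_transpose, this.rank_matrix]
    rw [Fintype.linearIndependent_iff] at hv ⊢
    intro c hc
    refine hv c (MonoidAlgebra.ext (Finsupp.ext fun x => ?_))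
    by_cases hx : x ∈ T
    · simpa [V] using congrFun hc ⟨x, hx⟩
    · simp [Finsupp.notMem_support_iff.1 fun h => hx (hvT _ h)]
  have hMV : mulMatrix f E T * V = 0 := by
    ext y i
    simp only [Matrix.mul_apply, mulMatrix, V, Matrix.of_apply, Matrix.zero_apply]
    rw [sum_coe_sort T fun x => f.coeff (y * x⁻¹) * (v i).coeff x,
      ← coeff_mul_eq_sum_of_support_subset _ _ (hvT i), hfv i, coeff_zero, Finsupp.coe_zero,
      Pi.zero_apply]
  have := Matrix.rank_add_rank_le_card_of_mul_eq_zero hMV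
  rwa [rank_mulMatrix hf hET, hV, Fintype.card_coe] at this

theorem card_add_card_le_card_of_mul_eq_zero {f g : K[Γ]} (hf : IsRightRegular f)
    (hg : g.coeff 1 ≠ 0) (hfg : f * g = 0) {E S : Finset Γ}
    (hSE : ∀ s ∈ S, ∀ a ∈ g.coeff.support, a * s ∈ E)
    (hS : ∀ s ∈ S, ∀ t ∈ S, s * t⁻¹ ∈ g.coeff.support → s = t) :
    E.card + S.card ≤
      (E ∪ (unop (invOp f)).coeff.support.biUnion fun b => E.image (b * ·) \ E).card := by
  have hET : ∀ b ∈ (unop (invOp f)).coeff.support, ∀ e ∈ E,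
      b * e ∈ E ∪ (unop (invOp f)).coeff.support.biUnion fun b => E.image (b * ·) \ E :=
    fun b hb e he => by
      by_cases hbe : b * e ∈ E
      · exact mem_union_left _ hbe
      · exact mem_union_right _ (mem_biUnion.2 ⟨b, hb, mem_sdiff.2 ⟨mem_image_of_mem _ he, hbe⟩⟩)
  have hsupp (s : S) : (g * single (s : Γ) 1).coeff.support ⊆ E := fun x hx => by
    have := hSE s s.2 _ (Finsupp.mem_support_iff.2 (by simpa using hx))
    rwa [inv_mul_cancel_right] at this
  simpa using card_add_card_le_card hf hET (linearIndependent_mul_single hg hS)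
    (fun s => (hsupp s).trans subset_union_left) fun s => by rw [← mul_assoc, hfg, zero_mul]

end Field

end MonoidAlgebra

open Finset MonoidAlgebra in
theorem IsFolnerSeq.isLeftRegular_of_isRightRegular {K Γ : Type*} [Field K] [Group Γ]
    {F : ℕ → Finset Γ} (hF : IsFolnerSeq F) {f : K[Γ]} (hf : IsRightRegular f) :
    IsLeftRegular f := by
  rw [isLeftRegular_iff_right_eq_zero_of_mul]
  intro g₀ hfg₀
  by_contra hg₀
  obtain ⟨g, hg, hfg⟩ := exists_mul_eq_zero_coeff_one_ne_zero hfg₀ hg₀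
  set A := g.coeff.support
  set B := (unop (invOp f)).coeff.support
  -- the estimates below combine to `N * |E| ≤ (N - 1) * |E|`
  set N := A.card * (2 * B.card + 1) + 1
  obtain ⟨E, hE, hEinv⟩ := hF.exists_mul_card_image_sdiff_le (A ∪ B) N
  set D := E.filter fun e => ∀ a ∈ A, a * e ∈ E
  obtain ⟨S, hSD, hSsep, hDS⟩ := exists_subset_separated A D (Finsupp.mem_support_iff.2 hg)
  set T := E ∪ B.biUnion fun b => E.image (b * ·) \ E
  have hST : E.card + S.card ≤ T.card := card_add_card_le_card_of_mul_eq_zero hf hg hfg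
    (fun s hs => (mem_filter.1 (hSD hs)).2) hSsep
  set α := ∑ a ∈ A, (E.image (a * ·) \ E).card
  set β := ∑ b ∈ B, (E.image (b * ·) \ E).card
  have hD : E.card ≤ D.card + α := card_le_card_filter_add_sum_card_image_sdiff A E
  have hT : T.card ≤ E.card + β := card_union_biUnion_image_sdiff_le B E
  have hα : N * α ≤ A.card * E.card :=
    mul_sum_card_image_sdiff_le fun a ha => hEinv a (mem_union_left _ ha)
  have hβ : N * β ≤ B.card * E.card :=
    mul_sum_card_image_sdiff_le fun b hb => hEinv b (mem_union_right _ hb)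
  have hS : N * S.card ≤ B.card * E.card := (Nat.mul_le_mul_left N (by omega)).trans hβ
  have hE' : N * E.card ≤ 2 * A.card * (N * S.card) + A.card * E.card := by
    nlinarith [Nat.mul_le_mul_left N hD, Nat.mul_le_mul_left N hDS]
  have hcontra : N * E.card ≤ 2 * A.card * (B.card * E.card) + A.card * E.card :=
    hE'.trans (by gcongr)
  simp only [N] at hcontra
  nlinarith [hE.card_pos]

open MonoidAlgebra in
theorem IsFolnerSeq.isLeftRegular_iff_isRightRegular {R Γ : Type*} [CommRing R] [IsDomain R]
    [Group Γ] {F : ℕ → Finset Γ} (hF : IsFolnerSeq F) {f : R[Γ]} :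
    IsLeftRegular f ↔ IsRightRegular f := by
  have key (a : R[Γ]) (ha : IsRightRegular a) : IsLeftRegular a :=
    isLeftRegular_of_isLeftRegular_mapRingHom (K := FractionRing R)
      (hF.isLeftRegular_of_isRightRegular (isRightRegular_mapRingHom ha))
  exact ⟨isRightRegular_of_isLeftRegular_of_mulEquiv_op invOp.toMulEquiv key, key f⟩

theorem stmt3_general (Γ : Type*) [Group Γ]
    (amenable : ∃ F : ℕ → Finset Γ, IsFolnerSeq F) (f : MonoidAlgebra ℤ Γ) :
    (∃ g : MonoidAlgebra ℤ Γ, g ≠ 0 ∧ g * f = 0) ↔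
      (∃ g : MonoidAlgebra ℤ Γ, g ≠ 0 ∧ f * g = 0) := by
  obtain ⟨F, hF⟩ := amenable
  have h := (hF.isLeftRegular_iff_isRightRegular (f := f)).not.symm
  simp only [isLeftRegular_iff_right_eq_zero_of_mul, isRightRegular_iff_left_eq_zero_of_mul,
    not_forall, exists_prop] at h
  simpa only [and_comm] using h

/-- Let `Γ` be a countably infinite discrete amenable group and `f ∈ ℤΓ`.
Then `f` is a right zero-divisor in `ℤΓ` iff `f` is a left zero-divisor in `ℤΓ`. -/
theorem stmt3 (Γ : Type*) [Group Γ] [Countable Γ] [Infinite Γ]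
    (amenable : ∃ F : ℕ → Finset Γ, IsFolnerSeq F) (f : MonoidAlgebra ℤ Γ) :
    (∃ g : MonoidAlgebra ℤ Γ, g ≠ 0 ∧ g * f = 0) ↔
      (∃ g : MonoidAlgebra ℤ Γ, g ≠ 0 ∧ f * g = 0) :=
  stmt3_general Γ amenable f
end

section
/- Let Γ be a group, U a unitary representation of Γ on a real or complex Hilbert space 𝓗 that does not weakly contain the trivial representation (i.e., there is a finite set F ⊂ Γ and ε > 0 such that Σ_{δ∈F} ‖v - U^δ v‖ ≥ ε‖v‖ for all v ∈ 𝓗). Then every 1-cocycle c: Γ → 𝓗 for U that is an approximate coboundary (a pointwise limit of coboundaries) is itself a coboundary. -/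
/-!
A spectral gap makes `v ↦ (v - U^δ v)_{δ ∈ F}` bounded below, so any sequence `b n` whose
coboundaries approximate `c` on `F` is Cauchy. Its limit `b` exists by completeness, and
`c γ = b - U^γ b` for every `γ` by continuity of `U^γ`.
-/

open Filter Topology

section SpectralGap

variable {ι E F : Type*} [SeminormedAddCommGroup E] [FunLike F E E] [AddMonoidHomClass F E E]
  {T : ι → F} {S : Finset ι} {ε : ℝ}

theorem mul_norm_sub_le_of_spectral_gap (hgap : ∀ v : E, ε * ‖v‖ ≤ ∑ δ ∈ S, ‖v - T δ v‖)
    (c : ι → E) (x y : E) :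
    ε * ‖x - y‖ ≤ ∑ δ ∈ S, ‖x - T δ x - c δ‖ + ∑ δ ∈ S, ‖y - T δ y - c δ‖ := by
  rw [← Finset.sum_add_distrib]
  refine (hgap _).trans (Finset.sum_le_sum fun δ _ => ?_)
  have hsplit : x - y - T δ (x - y) = (x - T δ x - c δ) - (y - T δ y - c δ) := by
    rw [map_sub]; abel
  rw [hsplit]
  exact norm_sub_le _ _

theorem cauchySeq_of_spectral_gap (hε : 0 < ε)
    (hgap : ∀ v : E, ε * ‖v‖ ≤ ∑ δ ∈ S, ‖v - T δ v‖) {b : ℕ → E} {c : ι → E}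
    (hb : ∀ δ ∈ S, Tendsto (fun n => b n - T δ (b n)) atTop (𝓝 (c δ))) :
    CauchySeq b := by
  set defect : ℕ → ℝ := fun n => ∑ δ ∈ S, ‖b n - T δ (b n) - c δ‖
  have hdefect : Tendsto defect atTop (𝓝 0) := by
    simpa using tendsto_finsetSum S fun δ hδ =>
      (tendsto_iff_norm_sub_tendsto_zero.mp (hb δ hδ))
  have hbound : Tendsto (fun p : ℕ × ℕ => (defect p.1 + defect p.2) / ε) atTop (𝓝 0) := by
    rw [← prod_atTop_atTop_eq]
    simpa using ((hdefect.comp tendsto_fst).add (hdefect.comp tendsto_snd)).div_const ε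
  refine cauchySeq_iff_tendsto_dist_atTop_0.mpr
    (squeeze_zero (fun _ => dist_nonneg) (fun p => ?_) hbound)
  rw [dist_eq_norm, le_div_iff₀ hε, mul_comm]
  exact mul_norm_sub_le_of_spectral_gap hgap c _ _

end SpectralGap

theorem stmt10_general (𝕜 : Type*) [RCLike 𝕜] (Γ : Type*) [Group Γ]
    (H : Type*) [NormedAddCommGroup H] [InnerProductSpace 𝕜 H] [CompleteSpace H]
    (U : Γ →* (H ≃ₗᵢ[𝕜] H))
    (hU : ∃ F : Finset Γ, ∃ ε : ℝ, 0 < ε ∧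
      ∀ v : H, ε * ‖v‖ ≤ ∑ δ ∈ F, ‖v - U δ v‖)
    (c : Γ → H)
    (happrox : ∃ b : ℕ → H, ∀ γ : Γ,
      Filter.Tendsto (fun n => ‖(b n - U γ (b n)) - c γ‖) Filter.atTop (nhds 0)) :
    ∃ b : H, ∀ γ : Γ, c γ = b - U γ b := by
  obtain ⟨F, ε, hε, hgap⟩ := hU
  obtain ⟨b, hb⟩ := happrox
  have hconv : ∀ γ, Tendsto (fun n => b n - U γ (b n)) atTop (𝓝 (c γ)) := fun γ =>
    tendsto_iff_norm_sub_tendsto_zero.mpr (hb γ)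
  obtain ⟨L, hL⟩ := cauchySeq_tendsto_of_complete
    (cauchySeq_of_spectral_gap hε hgap fun δ _ => hconv δ)
  exact ⟨L, fun γ =>
    tendsto_nhds_unique (hconv γ) (hL.sub (((U γ).continuous.tendsto L).comp hL))⟩

/-- Let `U` be a unitary representation of a group `Γ` on a (real or
complex) Hilbert space `𝓗` that does not weakly contain the trivial representation:
there are a finite `F ⊆ Γ` and `ε > 0` with `Σ_{δ∈F} ‖v - U^δ v‖ ≥ ε‖v‖` for all `v`.
Then every 1-cocycle `c : Γ → 𝓗` for `U` that is an approximate coboundary is a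
coboundary. -/
theorem stmt10 (𝕜 : Type*) [RCLike 𝕜] (Γ : Type*) [Group Γ]
    (H : Type*) [NormedAddCommGroup H] [InnerProductSpace 𝕜 H] [CompleteSpace H]
    (U : Γ →* (H ≃ₗᵢ[𝕜] H))
    (hU : ∃ F : Finset Γ, ∃ ε : ℝ, 0 < ε ∧
      ∀ v : H, ε * ‖v‖ ≤ ∑ δ ∈ F, ‖v - U δ v‖)
    (c : Γ → H) (hc : ∀ γ γ' : Γ, c (γ * γ') = c γ + U γ (c γ'))
    (happrox : ∃ b : ℕ → H, ∀ γ : Γ,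
      Filter.Tendsto (fun n => ‖(b n - U γ (b n)) - c γ‖) Filter.atTop (nhds 0)) :
    ∃ b : H, ∀ γ : Γ, c γ = b - U γ b :=
  stmt10_general 𝕜 Γ H U hU c happrox
end

section
/- Let 𝓗 be a Hilbert space and Y ⊂ 𝓗 a nonempty bounded subset. Then the function v ↦ sup_{y∈Y} ‖v - y‖ attains its infimum at exactly one point of 𝓗 (the Chebyshev center of Y). -/
/-!
By the parallelogram law (Apollonius), `4 ‖m - y‖² + ‖v - w‖² = 2 ‖v - y‖² + 2 ‖w - y‖²` for the
midpoint `m` of `v` and `w`; taking suprema over `y ∈ Y`, the squared farthest distance `R²`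
satisfies `4 R(m)² + ‖v - w‖² ≤ 2 R(v)² + 2 R(w)²`. Hence any minimizing sequence of `R²` is
Cauchy, its limit is a minimizer by continuity, and two minimizers coincide.
-/

open Filter Topology Set Metric

section MetricSpace

variable {α : Type*} [PseudoMetricSpace α] {Y : Set α}

noncomputable def farthestDist (Y : Set α) (v : α) : ℝ := ⨆ y : Y, dist v y

lemma farthestDist_nonneg (v : α) : 0 ≤ farthestDist Y v :=
  Real.iSup_nonneg fun _ ↦ dist_nonneg

lemma bddAbove_range_dist (hYb : Bornology.IsBounded Y) (v : α) :
    BddAbove (range fun y : Y ↦ dist v y) := by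
  obtain ⟨r, hr⟩ := (isBounded_iff_subset_closedBall v).1 hYb
  exact ⟨r, by rintro _ ⟨y, rfl⟩; exact mem_closedBall'.1 (hr y.2)⟩

lemma dist_le_farthestDist (hYb : Bornology.IsBounded Y) {v y : α} (hy : y ∈ Y) :
    dist v y ≤ farthestDist Y v :=
  le_ciSup (bddAbove_range_dist hYb v) ⟨y, hy⟩

lemma farthestDist_le (hY : Y.Nonempty) {v : α} {r : ℝ} (h : ∀ y ∈ Y, dist v y ≤ r) :
    farthestDist Y v ≤ r :=
  have := hY.to_subtype
  ciSup_le fun y ↦ h y y.2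

lemma sq_farthestDist_le (hY : Y.Nonempty) {v : α} {b : ℝ} (h : ∀ y ∈ Y, dist v y ^ 2 ≤ b) :
    farthestDist Y v ^ 2 ≤ b := by
  obtain ⟨y₀, hy₀⟩ := hY
  have hb : 0 ≤ b := (sq_nonneg _).trans (h y₀ hy₀)
  have hR : farthestDist Y v ≤ √b :=
    farthestDist_le ⟨y₀, hy₀⟩ fun y hy ↦ (le_abs_self _).trans (Real.abs_le_sqrt (h y hy))
  exact (Real.le_sqrt (farthestDist_nonneg v) hb).1 hR

lemma lipschitzWith_farthestDist (hY : Y.Nonempty) (hYb : Bornology.IsBounded Y) :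
    LipschitzWith 1 (farthestDist Y) :=
  LipschitzWith.of_le_add fun v w ↦ farthestDist_le hY fun y hy ↦
    calc dist v y ≤ dist w y + dist v w := by linarith [dist_triangle v w y]
      _ ≤ farthestDist Y w + dist v w := by gcongr; exact dist_le_farthestDist hYb hy

end MetricSpace

theorem existsUnique_forall_le_of_exists_sq_dist_le {α : Type*} [MetricSpace α] [CompleteSpace α]
    [Nonempty α] {g : α → ℝ} (hg : Continuous g) (hbdd : BddBelow (range g))
    (hmid : ∀ v w, ∃ m, 4 * g m + dist v w ^ 2 ≤ 2 * g v + 2 * g w) :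
    ∃! v, ∀ w, g v ≤ g w := by
  set r := ⨅ v, g v
  have hr : ∀ w, r ≤ g w := ciInf_le hbdd
  have hdist : ∀ v w, dist v w ^ 2 ≤ 2 * (g v - r) + 2 * (g w - r) := fun v w ↦ by
    obtain ⟨m, hm⟩ := hmid v w
    linarith [hr m]
  obtain ⟨s, hs_anti, hs_lim, hs_mem⟩ := exists_seq_tendsto_sInf (range_nonempty g) hbdd
  replace hs_lim : Tendsto s atTop (𝓝 r) := hs_lim
  choose u hu using hs_mem
  have hcauchy : CauchySeq u := by
    refine cauchySeq_of_le_tendsto_0 (fun N ↦ √(4 * (s N - r))) (fun n m N hn hm ↦ ?_) ?_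
    · refine (le_abs_self _).trans (Real.abs_le_sqrt ?_)
      linarith [hdist (u n) (u m), hu n, hu m, hs_anti hn, hs_anti hm]
    · simpa using ((hs_lim.sub_const r).const_mul 4).sqrt
  obtain ⟨v, hv⟩ := cauchySeq_tendsto_of_complete hcauchy
  have hv_min : g v ≤ r := le_of_tendsto_of_tendsto' ((hg.tendsto v).comp hv) hs_lim (by simp [hu])
  refine ⟨v, fun w ↦ hv_min.trans (hr w), fun x hx ↦ ?_⟩
  have : dist x v ^ 2 ≤ 0 := by linarith [hdist x v, hx v]
  exact dist_eq_zero.1 ((sq_nonpos_iff _).1 this)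

section Euclidean

variable {V P : Type*} [NormedAddCommGroup V] [InnerProductSpace ℝ V] [MetricSpace P]
  [NormedAddTorsor V P] {Y : Set P}

lemma sq_farthestDist_midpoint_le (hY : Y.Nonempty) (hYb : Bornology.IsBounded Y) (v w : P) :
    4 * farthestDist Y (midpoint ℝ v w) ^ 2 + dist v w ^ 2 ≤
      2 * farthestDist Y v ^ 2 + 2 * farthestDist Y w ^ 2 := by
  suffices farthestDist Y (midpoint ℝ v w) ^ 2 ≤
      (2 * farthestDist Y v ^ 2 + 2 * farthestDist Y w ^ 2 - dist v w ^ 2) / 4 by linarith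
  refine sq_farthestDist_le hY fun y hy ↦ ?_
  have := EuclideanGeometry.dist_sq_add_dist_sq_eq_two_mul_dist_midpoint_sq_add_half_dist_sq y v w
  have hv := pow_le_pow_left₀ dist_nonneg (dist_le_farthestDist hYb (v := v) hy) 2
  have hw := pow_le_pow_left₀ dist_nonneg (dist_le_farthestDist hYb (v := w) hy) 2
  rw [dist_comm y, dist_comm y, dist_comm y] at this
  linarith

end Euclidean

/-- In a Hilbert space `𝓗`, for any nonempty bounded subset `Y`, the
function `v ↦ sup_{y ∈ Y} ‖v - y‖` attains its infimum at exactly one point, the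
Chebyshev center of `Y`. -/
theorem stmt11 (𝕜 : Type*) [RCLike 𝕜]
    (H : Type*) [NormedAddCommGroup H] [InnerProductSpace 𝕜 H] [CompleteSpace H]
    (Y : Set H) (hY : Y.Nonempty) (hYb : Bornology.IsBounded Y) :
    ∃! v : H, ∀ w : H, (⨆ y : Y, ‖v - (y : H)‖) ≤ ⨆ y : Y, ‖w - (y : H)‖ := by
  let : InnerProductSpace ℝ H := InnerProductSpace.rclikeToReal 𝕜 H
  have hR (v : H) : (⨆ y : Y, ‖v - (y : H)‖) = farthestDist Y v := by
    simp only [farthestDist, dist_eq_norm]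
  have hsq (v w : H) : farthestDist Y v ≤ farthestDist Y w ↔
      farthestDist Y v ^ 2 ≤ farthestDist Y w ^ 2 :=
    (pow_le_pow_iff_left₀ (farthestDist_nonneg v) (farthestDist_nonneg w) two_ne_zero).symm
  simp only [hR, hsq]
  exact existsUnique_forall_le_of_exists_sq_dist_le
    ((lipschitzWith_farthestDist hY hYb).continuous.pow 2)
    ⟨0, by rintro _ ⟨v, rfl⟩; positivity⟩
    fun v w ↦ ⟨midpoint ℝ v w, sq_farthestDist_midpoint_le hY hYb v w⟩
end

section
/- Let U be a unitary representation of a group Γ on a Hilbert space 𝓗 and c: Γ → 𝓗 a 1-cocycle whose image Y = {c(γ) : γ ∈ Γ} is bounded. Then c is a coboundary: c(γ) = b - U^γ b where b is the Chebyshev center of Y. -/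
/-!
The cocycle identity says that `γ` acts on `H` by the affine isometry `v ↦ c γ + U γ v`, which
maps `Y = range c` onto itself and therefore preserves `f v = sup_{y ∈ Y} ‖v - y‖`. By
Apollonius's theorem `f ^ 2` is strongly midpoint convex, so minimizing sequences of `f` are
Cauchy and `f` has a unique minimizer `b`, the Chebyshev center of `Y`. By uniqueness `b` is fixed
by every `v ↦ c γ + U γ v`, i.e. `c γ = b - U γ b`.
-/

open Filter Topology Bornology Set

namespace Metric

section PseudoMetricSpace

variable {X : Type*} [PseudoMetricSpace X] {Y : Set X}

/-- Junk value `0` when `Y` is empty or unbounded. -/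
noncomputable def farthestDist (Y : Set X) (v : X) : ℝ :=
  ⨆ y : Y, dist v y

theorem farthestDist_nonneg (Y : Set X) (v : X) : 0 ≤ farthestDist Y v :=
  Real.iSup_nonneg fun _ => dist_nonneg

theorem dist_le_farthestDist (hY : IsBounded Y) (v : X) {y : X} (hy : y ∈ Y) :
    dist v y ≤ farthestDist Y v := by
  obtain ⟨R, hR⟩ := (isBounded_iff_subset_closedBall v).1 hY
  refine le_ciSup (f := fun z : Y => dist v z) ⟨R, ?_⟩ ⟨y, hy⟩
  rintro _ ⟨z, rfl⟩
  exact (dist_comm v z).trans_le (hR z.2)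

theorem farthestDist_le {v : X} {M : ℝ} (h : ∀ y ∈ Y, dist v y ≤ M) (hM : 0 ≤ M) :
    farthestDist Y v ≤ M :=
  Real.iSup_le (fun y => h y y.2) hM

theorem lipschitzWith_farthestDist (hY : IsBounded Y) : LipschitzWith 1 (farthestDist Y) :=
  LipschitzWith.of_le_add fun v w =>
    farthestDist_le
      (fun y hy => by linarith [dist_triangle v w y, dist_le_farthestDist hY w hy, dist_comm v w])
      (by positivity [farthestDist_nonneg Y w])

theorem farthestDist_le_of_isometry {T : X → X} (hT : Isometry T) (hY : IsBounded Y)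
    (hYT : Y ⊆ T '' Y) (v : X) : farthestDist Y (T v) ≤ farthestDist Y v := by
  refine farthestDist_le (fun y hy => ?_) (farthestDist_nonneg Y v)
  obtain ⟨z, hz, rfl⟩ := hYT hy
  rw [hT.dist_eq]
  exact dist_le_farthestDist hY v hz

end PseudoMetricSpace

section MetricSpace

variable {X : Type*} [MetricSpace X]

/-- The midpoint form of `2`-strong convexity, `g m ≤ (g v + g w) / 2 - dist v w ^ 2 / 4`, which
`v ↦ dist v y ^ 2` satisfies in a real inner product space by Apollonius's theorem. -/
def IsStrongMidpointConvex (g : X → ℝ) : Prop :=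
  ∀ v w, ∃ m, 4 * g m + dist v w ^ 2 ≤ 2 * g v + 2 * g w

namespace IsStrongMidpointConvex

variable {g : X → ℝ}

/-- Minimizing sequences are Cauchy, since `dist v w ^ 2 ≤ 2 (g v - inf g) + 2 (g w - inf g)`. -/
theorem exists_forall_le [CompleteSpace X] [Nonempty X] (hg : IsStrongMidpointConvex g)
    (hcont : Continuous g) (hbdd : BddBelow (range g)) : ∃ b, ∀ w, g b ≤ g w := by
  set r := ⨅ v, g v
  have hr : ∀ v, r ≤ g v := ciInf_le hbdd
  have hdist : ∀ v w, dist v w ^ 2 ≤ 2 * (g v - r) + 2 * (g w - r) := fun v w => by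
    obtain ⟨m, hm⟩ := hg v w
    linarith [hr m]
  have hseq : ∀ n : ℕ, ∃ v, g v < r + 1 / (n + 1) := fun n =>
    exists_lt_of_ciInf_lt (lt_add_of_pos_right r (by positivity))
  choose v hv using hseq
  have hcauchy : CauchySeq v := by
    refine cauchySeq_of_le_tendsto_0 (fun N : ℕ => √(4 * (1 / (N + 1))))
      (fun n m N hn hm => ?_) ?_
    · have hn' : 1 / ((n : ℝ) + 1) ≤ 1 / (N + 1) := by gcongr
      have hm' : 1 / ((m : ℝ) + 1) ≤ 1 / (N + 1) := by gcongr
      exact Real.le_sqrt_of_sq_le (by linarith [hdist (v n) (v m), hv n, hv m])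
    · simpa only [Function.comp_def, mul_zero, Real.sqrt_zero] using
        (Real.continuous_sqrt.tendsto _).comp (tendsto_one_div_add_atTop_nhds_zero_nat.const_mul 4)
  obtain ⟨b, hb⟩ := cauchySeq_tendsto_of_complete hcauchy
  have hgb : g b ≤ r := by
    simpa only [add_zero] using le_of_tendsto_of_tendsto' ((hcont.tendsto b).comp hb)
      (tendsto_const_nhds.add tendsto_one_div_add_atTop_nhds_zero_nat) fun n => (hv n).le
  exact ⟨b, fun w => hgb.trans (hr w)⟩

theorem eq_of_le (hg : IsStrongMidpointConvex g) {b w : X} (hb : ∀ v, g b ≤ g v)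
    (hw : g w ≤ g b) : w = b := by
  obtain ⟨m, hm⟩ := hg w b
  have hsq : dist w b ^ 2 ≤ 0 := by linarith [hb m]
  exact dist_eq_zero.1 ((sq_nonpos_iff _).1 hsq)

end IsStrongMidpointConvex

end MetricSpace

section InnerProductSpace

variable {E : Type*} [NormedAddCommGroup E] [InnerProductSpace ℝ E] {Y : Set E}

theorem isStrongMidpointConvex_sq_farthestDist (hY : IsBounded Y) (hne : Y.Nonempty) :
    IsStrongMidpointConvex fun v => farthestDist Y v ^ 2 := by
  intro v w
  refine ⟨midpoint ℝ v w, ?_⟩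
  set A := (2 * farthestDist Y v ^ 2 + 2 * farthestDist Y w ^ 2 - dist v w ^ 2) / 4 with hA_def
  have hA : ∀ y ∈ Y, dist (midpoint ℝ v w) y ^ 2 ≤ A := fun y hy => by
    have apollonius :=
      EuclideanGeometry.dist_sq_add_dist_sq_eq_two_mul_dist_midpoint_sq_add_half_dist_sq y v w
    rw [dist_comm y v, dist_comm y w, dist_comm y] at apollonius
    have hv := pow_le_pow_left₀ dist_nonneg (dist_le_farthestDist hY v hy) 2
    have hw := pow_le_pow_left₀ dist_nonneg (dist_le_farthestDist hY w hy) 2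
    rw [div_pow] at apollonius
    linarith
  obtain ⟨y, hy⟩ := hne
  have hA₀ : 0 ≤ A := (sq_nonneg _).trans (hA y hy)
  have hmid : farthestDist Y (midpoint ℝ v w) ≤ √A :=
    farthestDist_le (fun y hy => Real.le_sqrt_of_sq_le (hA y hy)) (Real.sqrt_nonneg A)
  have := (Real.le_sqrt (farthestDist_nonneg _ _) hA₀).1 hmid
  dsimp only
  linarith

theorem exists_forall_farthestDist_le [CompleteSpace E] (hY : IsBounded Y) (hne : Y.Nonempty) :
    ∃ b, ∀ w, farthestDist Y b ≤ farthestDist Y w := by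
  obtain ⟨b, hb⟩ := (isStrongMidpointConvex_sq_farthestDist hY hne).exists_forall_le
    ((lipschitzWith_farthestDist hY).continuous.pow 2)
    ⟨0, by rintro _ ⟨v, rfl⟩; positivity⟩
  exact ⟨b, fun w => (sq_le_sq₀ (farthestDist_nonneg Y b) (farthestDist_nonneg Y w)).1 (hb w)⟩

theorem eq_of_farthestDist_le (hY : IsBounded Y) (hne : Y.Nonempty) {b w : E}
    (hb : ∀ v, farthestDist Y b ≤ farthestDist Y v) (hw : farthestDist Y w ≤ farthestDist Y b) :
    w = b :=
  (isStrongMidpointConvex_sq_farthestDist hY hne).eq_of_le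
    (fun v => pow_le_pow_left₀ (farthestDist_nonneg Y b) (hb v) 2)
    (pow_le_pow_left₀ (farthestDist_nonneg Y w) hw 2)

end InnerProductSpace

end Metric

theorem range_subset_image_of_cocycle {Γ E : Type*} [Group Γ] [Add E] {U : Γ → E → E}
    {c : Γ → E} (hc : ∀ γ γ', c (γ * γ') = c γ + U γ (c γ')) (γ : Γ) :
    range c ⊆ (fun v => c γ + U γ v) '' range c := by
  rintro _ ⟨γ', rfl⟩
  refine ⟨c (γ⁻¹ * γ'), mem_range_self _, ?_⟩
  simpa only [mul_inv_cancel_left] using (hc γ (γ⁻¹ * γ')).symm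

/-- If `U` is a unitary representation of `Γ` on a Hilbert space `𝓗` and
`c : Γ → 𝓗` is a 1-cocycle with bounded image `Y = c(Γ)`, then `c` is a coboundary
`c(γ) = b - U^γ b`, where `b` is the Chebyshev center of `Y` (the unique minimizer of
`v ↦ sup_{y∈Y} ‖v - y‖`). -/
theorem stmt12 (𝕜 : Type*) [RCLike 𝕜] (Γ : Type*) [Group Γ]
    (H : Type*) [NormedAddCommGroup H] [InnerProductSpace 𝕜 H] [CompleteSpace H]
    (U : Γ →* (H ≃ₗᵢ[𝕜] H))
    (c : Γ → H) (hc : ∀ γ γ' : Γ, c (γ * γ') = c γ + U γ (c γ'))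
    (hbdd : Bornology.IsBounded (Set.range c)) :
    ∃ b : H, (∀ γ : Γ, c γ = b - U γ b) ∧
      ∀ w : H, (⨆ y : Set.range c, ‖b - (y : H)‖) ≤ ⨆ y : Set.range c, ‖w - (y : H)‖ := by
  let : InnerProductSpace ℝ H := InnerProductSpace.rclikeToReal 𝕜 H
  obtain ⟨b, hb⟩ := Metric.exists_forall_farthestDist_le hbdd (range_nonempty c)
  refine ⟨b, fun γ => ?_, by simpa only [Metric.farthestDist, dist_eq_norm] using hb⟩
  have hT : Isometry fun v => c γ + U γ v := (isometry_add_left (c γ)).comp (U γ).isometry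
  have hfixed : c γ + U γ b = b :=
    Metric.eq_of_farthestDist_le hbdd (range_nonempty c) hb
      (Metric.farthestDist_le_of_isometry hT hbdd (range_subset_image_of_cocycle hc γ) b)
  exact eq_sub_of_add_eq hfixed
end

section
/- Let Γ be a countably infinite discrete group, Δ ⊆ Γ an infinite subgroup, and c: Δ → ℤΓ ⊂ ℓ²(Γ,ℝ) a 1-cocycle for the left translation action. If there exists b ∈ ℓ²(Γ,ℝ) with c(δ) = b - δ·b for all δ ∈ Δ, then b has integer coordinates, i.e., b ∈ ℓ²(Γ,ℤ) = ℤΓ, so c is a coboundary with values in ℤΓ. -/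
/-!
Since `b ∈ ℓ²`, its coordinates tend to `0` along the cofinite filter, and `δ ↦ δ⁻¹γ` is injective;
so, `Δ` being infinite, `b (δ⁻¹γ) → 0` as `δ → ∞` in `Δ`. Hence the integers
`c(δ)_γ = b γ - b (δ⁻¹γ)` converge to `b γ`, which is therefore an integer because `ℤ` is closed in `ℝ`.
-/

open Filter Topology

theorem Memℓp.tendsto_norm_cofinite_zero {ι : Type*} {E : ι → Type*}
    [∀ i, NormedAddCommGroup (E i)] {p : ENNReal} {f : ∀ i, E i} (hf : Memℓp f p)
    (hp : 0 < p.toReal) :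
    Tendsto (fun i => ‖f i‖) cofinite (𝓝 0) := by
  have h := (hf.summable hp).tendsto_cofinite_zero.rpow_const (p := p.toReal⁻¹)
    (Or.inr (by positivity))
  rw [Real.zero_rpow (inv_ne_zero hp.ne')] at h
  refine h.congr fun i => ?_
  rw [← Real.rpow_mul (norm_nonneg _), mul_inv_cancel₀ hp.ne', Real.rpow_one]

theorem Subgroup.tendsto_inv_mul_cofinite {Γ : Type*} [Group Γ] (Δ : Subgroup Γ) (γ : Γ) :
    Tendsto (fun δ : Δ => (δ : Γ)⁻¹ * γ) cofinite cofinite :=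
  (mul_left_injective γ |>.comp <| inv_injective.comp Subtype.coe_injective).tendsto_cofinite

theorem stmt13_general (Γ : Type*) [Group Γ]
    (Δ : Subgroup Γ) [Infinite Δ]
    (c : Δ → MonoidAlgebra ℤ Γ)
    (b : lp (fun _ : Γ => ℝ) 2)
    (hb : ∀ (δ : Δ) (γ : Γ), ((c δ).coeff γ : ℝ) = b γ - b ((δ : Γ)⁻¹ * γ)) :
    ∀ γ : Γ, ∃ n : ℤ, b γ = (n : ℝ) := by
  intro γ
  have hb_translate : Tendsto (fun δ : Δ => b ((δ : Γ)⁻¹ * γ)) cofinite (𝓝 0) :=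
    tendsto_zero_iff_norm_tendsto_zero.2 <|
      ((lp.memℓp b).tendsto_norm_cofinite_zero (by norm_num)).comp (Δ.tendsto_inv_mul_cofinite γ)
  have hc : Tendsto (fun δ : Δ => ((c δ).coeff γ : ℝ)) cofinite (𝓝 (b γ)) := by
    simpa only [hb, sub_zero] using hb_translate.const_sub (b γ)
  obtain ⟨n, hn⟩ :=
    Real.isClosed_range_intCast.mem_of_tendsto hc (.of_forall fun δ => ⟨(c δ).coeff γ, rfl⟩)
  exact ⟨n, hn.symm⟩

/-- Let `Γ` be countably infinite, `Δ ⊆ Γ` an infinite subgroup, and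
`c : Δ → ℤΓ ⊂ ℓ²(Γ,ℝ)` a 1-cocycle for left translation. If `b ∈ ℓ²(Γ,ℝ)` satisfies
`c(δ) = b - δ·b` for all `δ ∈ Δ` (pointwise: `c(δ)_γ = b_γ - b_{δ⁻¹γ}`), then `b` has
integer coordinates, i.e. `b ∈ ℓ²(Γ,ℤ) = ℤΓ`. -/
theorem stmt13 (Γ : Type*) [Group Γ] [Countable Γ] [Infinite Γ]
    (Δ : Subgroup Γ) [Infinite Δ]
    (c : Δ → MonoidAlgebra ℤ Γ)
    (hc : ∀ δ δ' : Δ, c (δ * δ') = c δ + MonoidAlgebra.single (δ : Γ) (1 : ℤ) * c δ')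
    (b : lp (fun _ : Γ => ℝ) 2)
    (hb : ∀ (δ : Δ) (γ : Γ), ((c δ).coeff γ : ℝ) = b γ - b ((δ : Γ)⁻¹ * γ)) :
    ∀ γ : Γ, ∃ n : ℤ, b γ = (n : ℝ) :=
  stmt13_general Γ Δ c b hb
end

section
/- Let Γ be a countably infinite discrete group, f ∈ ℤΓ not a right zero-divisor, h ∈ ℤΓ, Δ the stabilizer of h + ℤΓf in Γ, and c: Δ → ℤΓ the cocycle defined by h - δh = c(δ)f. If Δ₀ ⊆ Δ is an infinite subgroup on which c is a coboundary (c(δ) = b - δb for some b ∈ ℤΓ and all δ ∈ Δ₀), then h = bf ∈ ℤΓf. -/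
/-!
Subtracting `bf` turns the cocycle identity `h - δh = (b - δb)f` into `δ(h - bf) = h - bf`,
so `h - bf` is fixed by every `δ ∈ Δ₀`. The coefficient of a fixed element at `δγ` equals its
coefficient at `γ`; a nonzero one would therefore have the infinite orbit `Δ₀γ` in its finite
support.
-/

variable {Γ : Type*} [Group Γ]

/-- The stabilizer `S(h + ℤΓf) = {γ ∈ Γ : γh - h ∈ ℤΓf}` of the coset `h + ℤΓf`. -/
def stab (Γ : Type*) [Group Γ] (f h : MonoidAlgebra ℤ Γ) : Subgroup Γ where
  carrier := {γ | ∃ g : MonoidAlgebra ℤ Γ, MonoidAlgebra.single γ (1 : ℤ) * h - h = g * f}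
  one_mem' := ⟨0, by rw [← MonoidAlgebra.one_def, one_mul, sub_self, zero_mul]⟩
  mul_mem' := by
    rintro γ γ' ⟨g, hg⟩ ⟨g', hg'⟩
    refine ⟨MonoidAlgebra.single γ (1 : ℤ) * g' + g, ?_⟩
    have : MonoidAlgebra.single (γ * γ') (1 : ℤ) * h - h =
        MonoidAlgebra.single γ (1 : ℤ) * (MonoidAlgebra.single γ' (1 : ℤ) * h - h) +
          (MonoidAlgebra.single γ (1 : ℤ) * h - h) := by
      rw [mul_sub, ← mul_assoc, MonoidAlgebra.single_mul_single]
      ring_nf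
      abel
    rw [this, hg, hg', add_mul, mul_assoc]
  inv_mem' := by
    rintro γ ⟨g, hg⟩
    refine ⟨-(MonoidAlgebra.single γ⁻¹ (1 : ℤ) * g), ?_⟩
    have : MonoidAlgebra.single γ⁻¹ (1 : ℤ) * h - h =
        -(MonoidAlgebra.single γ⁻¹ (1 : ℤ) *
          (MonoidAlgebra.single γ (1 : ℤ) * h - h)) := by
      rw [mul_sub, ← mul_assoc, MonoidAlgebra.single_mul_single]
      simp [← MonoidAlgebra.one_def, neg_sub]
    rw [this, hg, neg_mul, mul_assoc]

open MonoidAlgebra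

theorem mul_sub_mul_eq_self_of_sub_mul_eq {R : Type*} [Ring R] {u h b f : R}
    (hc : h - u * h = (b - u * b) * f) : u * (h - b * f) = h - b * f := by
  rw [sub_mul] at hc
  calc u * (h - b * f) = u * h - u * b * f + (h - u * h - (b * f - u * b * f)) := by
        rw [hc, sub_self, add_zero, mul_sub, mul_assoc]
    _ = h - b * f := by abel

theorem MonoidAlgebra.eq_zero_of_forall_single_one_mul_eq_self {k G : Type*} [Semiring k]
    [Group G] {S : Set G} (hS : S.Infinite) {x : MonoidAlgebra k G}
    (hx : ∀ δ ∈ S, single δ (1 : k) * x = x) : x = 0 := by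
  by_contra hne
  obtain ⟨γ, hγ⟩ : x.coeff.support.Nonempty :=
    Finsupp.support_nonempty_iff.mpr (mt MonoidAlgebra.coeff_eq_zero.mp hne)
  have horbit : (· * γ) '' S ⊆ x.coeff.support := by
    rintro _ ⟨δ, hδ, rfl⟩
    rw [Finset.mem_coe, Finsupp.mem_support_iff, ← hx δ hδ, coeff_single_mul_apply,
      inv_mul_cancel_left, one_mul, ← Finsupp.mem_support_iff]
    exact hγ
  exact (hS.image (mul_left_injective γ).injOn).mono horbit x.coeff.support.finite_toSet

theorem stmt16_general (Γ : Type*) [Group Γ]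
    (f : MonoidAlgebra ℤ Γ)
    (h : MonoidAlgebra ℤ Γ)
    (c : stab Γ f h → MonoidAlgebra ℤ Γ)
    (hc : ∀ δ : stab Γ f h, h - MonoidAlgebra.single (δ : Γ) (1 : ℤ) * h = c δ * f)
    (Δ₀ : Subgroup Γ) [Infinite Δ₀] (hΔ₀ : Δ₀ ≤ stab Γ f h)
    (b : MonoidAlgebra ℤ Γ)
    (hb : ∀ δ : Γ, (hδ : δ ∈ Δ₀) → c ⟨δ, hΔ₀ hδ⟩ =
      b - MonoidAlgebra.single δ (1 : ℤ) * b) :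
    h = b * f := by
  have hfixed : ∀ δ ∈ (Δ₀ : Set Γ), single δ (1 : ℤ) * (h - b * f) = h - b * f :=
    fun δ hδ => mul_sub_mul_eq_self_of_sub_mul_eq (hb δ hδ ▸ hc ⟨δ, hΔ₀ hδ⟩)
  exact sub_eq_zero.mp
    (eq_zero_of_forall_single_one_mul_eq_self (Set.infinite_coe_iff.mp ‹_›) hfixed)

/-- With `Γ` countably infinite, `f ∈ ℤΓ` not a right zero-divisor,
`h ∈ ℤΓ`, `Δ` the stabilizer of `h + ℤΓf`, and `c : Δ → ℤΓ` the cocycle with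
`h - δh = c(δ)f`: if `Δ₀ ⊆ Δ` is an infinite subgroup on which `c` is a coboundary,
`c(δ) = b - δb` for some `b ∈ ℤΓ`, then `h = bf ∈ ℤΓf`. -/
theorem stmt16 (Γ : Type*) [Group Γ] [Countable Γ] [Infinite Γ]
    (f : MonoidAlgebra ℤ Γ) (hf : ∀ g : MonoidAlgebra ℤ Γ, g * f = 0 → g = 0)
    (h : MonoidAlgebra ℤ Γ)
    (c : stab Γ f h → MonoidAlgebra ℤ Γ)
    (hc : ∀ δ : stab Γ f h, h - MonoidAlgebra.single (δ : Γ) (1 : ℤ) * h = c δ * f)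
    (Δ₀ : Subgroup Γ) [Infinite Δ₀] (hΔ₀ : Δ₀ ≤ stab Γ f h)
    (b : MonoidAlgebra ℤ Γ)
    (hb : ∀ δ : Γ, (hδ : δ ∈ Δ₀) → c ⟨δ, hΔ₀ hδ⟩ =
      b - MonoidAlgebra.single δ (1 : ℤ) * b) :
    h = b * f :=
  stmt16_general Γ f h c hc Δ₀ hΔ₀ b hb
end
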